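/- For SL_2 over a non-archimedean local field F, with b = 1, the elements w of the extended affine Weyl group (identified with chambers C_M^i of the standard apartment, where C_M^0 = C_M is the base chamber) for which the affine Deligne-Lusztig set X_w(σ) is nonempty are exactly C_M (i.e. i = 0) and C_M^i for i odd (both positive and negative). -/

import Mathlib

open Matrix

/-- The completion `L = 𝔽̄_p((t))` of the maximal unramified extension of the local
field `F = 𝔽_p((t))`. -/
abbrev Lfield (p : ℕ) [Fact p.Prime] : Type _ :=
  LaurentSeries (AlgebraicClosure (ZMod p))

/-- The uniformizer `π = t` of `L`. -/
noncomputable def unif (p : ℕ) [Fact p.Prime] : Lfield p :=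
  HahnSeries.single (1 : ℤ) 1

/-- `x` lies in the ring of integers `O_L = 𝔽̄_p[[t]]`. -/
def IsIntegral' (p : ℕ) [Fact p.Prime] (x : Lfield p) : Prop :=
  ∀ n : ℤ, n < 0 → x.coeff n = 0

/-- The standard Iwahori subgroup of `SL₂(L)`: determinant-one matrices with integral
entries whose lower-left entry lies in `π·O_L`. -/
def InIwahori (p : ℕ) [Fact p.Prime] (g : Matrix (Fin 2) (Fin 2) (Lfield p)) : Prop :=
  g.det = 1 ∧ (∀ i j, IsIntegral' p (g i j)) ∧ (∀ n : ℤ, n ≤ 0 → (g 1 0).coeff n = 0)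

open Classical in
/-- Representative in `SL₂(L)` of the element of the extended affine Weyl group
corresponding to the chamber `C_M^i` of the standard apartment: for even `i = 2k` the
translation `diag(π^k, π^(-k))`, and for odd `i = 2k - 1` the product of
`diag(π^k, π^(-k))` with the reflection `[[0,-1],[1,0]]` about the main vertex. -/
noncomputable def chamberRep (p : ℕ) [Fact p.Prime] (i : ℤ) :
    Matrix (Fin 2) (Fin 2) (Lfield p) :=
  if Even i then Matrix.diagonal ![unif p ^ (i / 2), unif p ^ (-(i / 2))]
  else Matrix.diagonal ![unif p ^ ((i + 1) / 2), unif p ^ (-((i + 1) / 2))] *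
    !![0, -1; 1, 0]

/-!
For even `i = 2k ≠ 0`, suppose `x⁻¹ σ(x) = g D g'` with `g, g'` Iwahori and
`D = diag(t^k, t^(-k))`. Then `y = x g` satisfies `σ(y) = y T` with `T = D g' σ(g)`, and `T` is
`t^(-|k|)` times an integral matrix whose reduction mod `t` has a nonzero diagonal entry and
vanishes off that entry's row. Such matrices form a semigroup stable under `σ`, so
`y⁻¹ σⁿ(y) = T σ(T) ⋯ σⁿ⁻¹(T)` has an entry of order exactly `-n|k|`; but `σ` preserves orders,
so the entries of `y⁻¹ σⁿ(y)` are bounded below independently of `n`.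

For odd `i`, the representative of `C_M^i` is `I`-doubly-equivalent to a unipotent matrix with
entry `t^m`, and by Artin–Schreier (`γ^p = γ + 1`) the unipotent `x` with entry `γ t^m` has
`x⁻¹ σ(x)` equal to it. For `i = 0` take `x = 1`.
-/

namespace Matrix

theorem mul_apply_fin_two_eq_add_rev {R : Type*} [NonUnitalNonAssocSemiring R]
    (M N : Matrix (Fin 2) (Fin 2) R) (a b j : Fin 2) :
    (M * N) a b = M a j * N j b + M a j.rev * N j.rev b := by
  fin_cases j
  · simp [mul_apply, Fin.sum_univ_two]
  · simp [mul_apply, Fin.sum_univ_two, add_comm]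

end Matrix

namespace HahnSeries

variable {Γ R : Type*} [LinearOrder Γ]

theorem le_orderTop_add [AddMonoid R] {x y : HahnSeries Γ R} {v : WithTop Γ}
    (hx : v ≤ x.orderTop) (hy : v ≤ y.orderTop) : v ≤ (x + y).orderTop :=
  (le_min hx hy).trans min_orderTop_le_orderTop_add

theorem lt_orderTop_add [AddMonoid R] {x y : HahnSeries Γ R} {v : WithTop Γ}
    (hx : v < x.orderTop) (hy : v < y.orderTop) : v < (x + y).orderTop :=
  (lt_min hx hy).trans_le min_orderTop_le_orderTop_add

theorem orderTop_eq_of_coeff_eq_zero_iff {R' : Type*} [Zero R] [Zero R'] {x : HahnSeries Γ R}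
    {y : HahnSeries Γ R'} (h : ∀ n, y.coeff n = 0 ↔ x.coeff n = 0) : y.orderTop = x.orderTop :=
  eq_of_forall_le_iff fun v => by simp only [le_orderTop_iff_forall, h]

end HahnSeries

open HahnSeries

theorem LaurentSeries.zero_lt_orderTop_iff_forall {R : Type*} [Zero R] {x : LaurentSeries R} :
    0 < x.orderTop ↔ ∀ n : ℤ, n ≤ 0 → x.coeff n = 0 := by
  have h : (0 : WithTop ℤ) < x.orderTop ↔ ((1 : ℤ) : WithTop ℤ) ≤ x.orderTop := by
    cases x.orderTop <;> simp; omega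
  simp only [h, le_orderTop_iff_forall, WithTop.coe_lt_coe, Order.lt_one_iff_nonpos]

namespace Matrix

variable {R m n : Type*}

theorem exists_le_orderTop [Zero R] [Finite m] [Finite n] (M : Matrix m n (LaurentSeries R)) :
    ∃ N : ℤ, ∀ i j, (N : WithTop ℤ) ≤ (M i j).orderTop := by
  obtain ⟨N, hN⟩ := (Set.finite_range fun ij : m × n => (M ij.1 ij.2).order).bddBelow
  refine ⟨N, fun i j => ?_⟩
  rcases eq_or_ne (M i j) 0 with h | h
  · simp [h]
  · rw [← order_eq_orderTop_of_ne_zero h, WithTop.coe_le_coe]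
    exact hN ⟨(i, j), rfl⟩

theorem le_orderTop_mul_apply [Semiring R] [Fintype n] {A B : Matrix n n (LaurentSeries R)}
    {a b : ℤ} (hA : ∀ i j, (a : WithTop ℤ) ≤ (A i j).orderTop)
    (hB : ∀ i j, (b : WithTop ℤ) ≤ (B i j).orderTop) (i j : n) :
    ((a + b : ℤ) : WithTop ℤ) ≤ ((A * B) i j).orderTop := by
  rw [mul_apply]
  refine Finset.sum_induction _ (fun x : LaurentSeries R => ((a + b : ℤ) : WithTop ℤ) ≤ x.orderTop)
    (fun _ _ => le_orderTop_add) (by simp) fun c _ => ?_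
  rw [WithTop.coe_add]
  exact (add_le_add (hA i c) (hB c j)).trans orderTop_add_le_mul

end Matrix

section Dominance

variable {R : Type*} [CommRing R]

/-- `M` is `t ^ w` times a matrix with integral entries whose reduction modulo `t` has a unit
`(j, j)` entry and a vanishing `j.rev`-th row. -/
def HasDominantEntry (j : Fin 2) (w : ℤ) (M : Matrix (Fin 2) (Fin 2) (LaurentSeries R)) : Prop :=
  (M j j).orderTop = w ∧
    ∀ b, (w : WithTop ℤ) ≤ (M j b).orderTop ∧ (w : WithTop ℤ) < (M j.rev b).orderTop

variable {σ : LaurentSeries R →+* LaurentSeries R} {j : Fin 2} {w : ℤ}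

theorem HasDominantEntry.mul [IsDomain R] {w' : ℤ} {M N : Matrix (Fin 2) (Fin 2) (LaurentSeries R)}
    (hM : HasDominantEntry j w M) (hN : HasDominantEntry j w' N) :
    HasDominantEntry j (w + w') (M * N) := by
  obtain ⟨hMj, hM⟩ := hM
  obtain ⟨hNj, hN⟩ := hN
  have hw : (w : WithTop ℤ) ≠ ⊤ := WithTop.coe_ne_top
  have hw' : (w' : WithTop ℤ) ≠ ⊤ := WithTop.coe_ne_top
  simp only [HasDominantEntry, mul_apply_fin_two_eq_add_rev _ _ _ _ j, WithTop.coe_add]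
  refine ⟨?_, fun b => ⟨?_, ?_⟩⟩
  · rw [orderTop_add_eq_left] <;> simp only [orderTop_mul, hMj, hNj]
    exact WithTop.add_lt_add_of_le_of_lt hw (hM j.rev).1 (hN j).2
  · exact le_orderTop_add (by simpa using add_le_add (hM j).1 (hN b).1)
      (by simpa using add_le_add (hM j.rev).1 (hN b).2.le)
  · exact lt_orderTop_add (by simpa using WithTop.add_lt_add_of_lt_of_le hw' (hM j).2 (hN b).1)
      (by simpa using WithTop.add_lt_add_of_lt_of_le hw' (hM j.rev).2 (hN b).2.le)

theorem HasDominantEntry.map (hσ : ∀ f, (σ f).orderTop = f.orderTop)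
    {M : Matrix (Fin 2) (Fin 2) (LaurentSeries R)} (hM : HasDominantEntry j w M) :
    HasDominantEntry j w (M.map σ) := by
  simpa only [HasDominantEntry, map_apply, hσ] using hM

theorem hasDominantEntry_diagonal_mul [IsDomain R] {d : Fin 2 → LaurentSeries R}
    {q : Matrix (Fin 2) (Fin 2) (LaurentSeries R)}
    (hdj : (d j).orderTop = w) (hdj' : (w : WithTop ℤ) < (d j.rev).orderTop)
    (hq : ∀ a b, 0 ≤ (q a b).orderTop) (hqj : (q j j).orderTop = 0) :
    HasDominantEntry j w (diagonal d * q) := by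
  simp only [HasDominantEntry, diagonal_mul, orderTop_mul, hdj, hqj, add_zero, true_and]
  exact fun b => ⟨le_add_of_nonneg_right (hq j b), hdj'.trans_le (le_add_of_nonneg_right (hq _ b))⟩

/-- Here `y * P` is `σ^[n + 1]` applied entrywise to `y`. -/
theorem exists_hasDominantEntry_of_map_eq_mul [IsDomain R]
    (hσ : ∀ f, (σ f).orderTop = f.orderTop) {y T : Matrix (Fin 2) (Fin 2) (LaurentSeries R)}
    (hT : HasDominantEntry j w T) (hyT : y.map σ = y * T) (n : ℕ) :
    ∃ P : Matrix (Fin 2) (Fin 2) (LaurentSeries R), HasDominantEntry j ((n + 1) * w) P ∧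
      ∀ a b, ((y * P) a b).orderTop = (y a b).orderTop := by
  induction n with
  | zero => exact ⟨T, by simpa using hT, fun a b => by rw [← hyT, map_apply, hσ]⟩
  | succ n ih =>
    obtain ⟨P, hP, hyP⟩ := ih
    refine ⟨T * P.map σ, by convert hT.mul (hP.map hσ) using 1; push_cast; ring, fun a b => ?_⟩
    rw [← mul_assoc, ← hyT, ← Matrix.map_mul, map_apply, hσ, hyP]

theorem map_ne_mul_of_hasDominantEntry [IsDomain R] (hσ : ∀ f, (σ f).orderTop = f.orderTop)
    (hw : w < 0) {y T : Matrix (Fin 2) (Fin 2) (LaurentSeries R)} (hy : IsUnit y.det)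
    (hT : HasDominantEntry j w T) : y.map σ ≠ y * T := by
  intro hyT
  obtain ⟨N, hN⟩ := y.exists_le_orderTop
  obtain ⟨N', hN'⟩ := y⁻¹.exists_le_orderTop
  obtain ⟨P, hP, hyP⟩ := exists_hasDominantEntry_of_map_eq_mul hσ hT hyT (N' + N).natAbs
  have hbound := le_orderTop_mul_apply hN' (fun a b => (hyP a b).symm ▸ hN a b) j j
  rw [nonsing_inv_mul_cancel_left _ _ hy, hP.1, WithTop.coe_le_coe] at hbound
  have : ((N' + N).natAbs + 1 : ℤ) * w ≤ -((N' + N).natAbs + 1) := by nlinarith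
  omega

end Dominance

section Frobenius

variable {K : Type*} [Semiring K] {p : ℕ} {σ : LaurentSeries K → LaurentSeries K}

theorem orderTop_apply_of_coeff_apply_eq_pow [NoZeroDivisors K] (hp : p ≠ 0)
    (hσ : ∀ f n, (σ f).coeff n = f.coeff n ^ p) (f : LaurentSeries K) :
    (σ f).orderTop = f.orderTop :=
  orderTop_eq_of_coeff_eq_zero_iff fun n => by rw [hσ, pow_eq_zero_iff hp]

theorem apply_single_of_coeff_apply_eq_pow (hp : p ≠ 0)
    (hσ : ∀ f n, (σ f).coeff n = f.coeff n ^ p) (m : ℤ) (c : K) :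
    σ (HahnSeries.single m c) = HahnSeries.single m (c ^ p) := by
  ext n
  rw [hσ, coeff_single, coeff_single]
  split_ifs <;> simp [hp]

end Frobenius

open Polynomial in
theorem exists_pow_eq_add_one {K : Type*} [Field K] [IsAlgClosed K] {p : ℕ} (hp : 1 < p) :
    ∃ γ : K, γ ^ p = γ + 1 := by
  obtain ⟨γ, hγ⟩ := IsAlgClosed.exists_root (X ^ p - X - 1 : K[X]) (by
    rw [degree_sub_eq_left_of_degree_lt] <;>
    rw [degree_sub_eq_left_of_degree_lt] <;> simp <;> omega)
  exact ⟨γ, by simpa [sub_sub, sub_eq_zero] using hγ⟩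

section Unipotent

variable {R : Type*} [CommRing R] {σ : R →+* R} {a b c : R}

theorem inv_mul_map_upper_unipotent (h : σ b = b + c) :
    !![1, b; 0, 1]⁻¹ * !![1, b; 0, 1].map σ = !![1, c; 0, 1] := by
  have hmap : !![1, b; 0, 1].map σ = !![1, b; 0, 1] * !![1, c; 0, 1] := by
    ext i j; fin_cases i <;> fin_cases j <;> simp [h, add_comm]
  rw [hmap, nonsing_inv_mul_cancel_left _ _ (by simp [det_fin_two_of])]

theorem inv_mul_map_lower_unipotent (h : σ b = b + c) :
    !![1, 0; b, 1]⁻¹ * !![1, 0; b, 1].map σ = !![1, 0; c, 1] := by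
  have hmap : !![1, 0; b, 1].map σ = !![1, 0; b, 1] * !![1, 0; c, 1] := by
    ext i j; fin_cases i <;> fin_cases j <;> simp [h]
  rw [hmap, nonsing_inv_mul_cancel_left _ _ (by simp [det_fin_two_of])]

theorem lower_unipotent_eq_mul_mul (hab : a * b = 1) :
    !![1, 0; b, 1] = !![1, a; 0, 1] * !![0, -a; b, 0] * !![1, a; 0, 1] := by
  ext i j; fin_cases i <;> fin_cases j <;> simp [mul_comm b a, hab]

theorem upper_unipotent_eq_mul_mul (hab : a * b = 1) :
    !![1, a; 0, 1] = -!![1, 0; b, 1] * !![0, -a; b, 0] * !![1, 0; b, 1] := by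
  ext i j; fin_cases i <;> fin_cases j <;> simp [mul_comm b a, hab]

end Unipotent

section Iwahori

variable {p : ℕ} [Fact p.Prime] {g h : Matrix (Fin 2) (Fin 2) (Lfield p)}

theorem unif_zpow (n : ℤ) : unif p ^ n = HahnSeries.single n 1 :=
  (RatFunc.single_zpow n).symm

theorem chamberRep_two_mul (k : ℤ) :
    chamberRep p (2 * k) = diagonal ![HahnSeries.single k 1, HahnSeries.single (-k) 1] := by
  simp [chamberRep, unif_zpow]

theorem chamberRep_two_mul_sub_one (k : ℤ) :
    chamberRep p (2 * k - 1) = !![0, -HahnSeries.single k 1; HahnSeries.single (-k) 1, 0] := by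
  have hodd : ¬ Even (2 * k - 1) := by rw [Int.not_even_iff_odd]; exact ⟨k - 1, by ring⟩
  ext a b
  fin_cases a <;> fin_cases b <;> simp [chamberRep, hodd, unif_zpow, mul_apply]

theorem inIwahori_iff :
    InIwahori p g ↔ g.det = 1 ∧ (∀ a b, 0 ≤ (g a b).orderTop) ∧ 0 < (g 1 0).orderTop := by
  simp only [InIwahori, IsIntegral', LaurentSeries.zero_lt_orderTop_iff_forall,
    le_orderTop_iff_forall]
  simp

theorem InIwahori.zero_le_orderTop (hg : InIwahori p g) (a b : Fin 2) : 0 ≤ (g a b).orderTop :=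
  (inIwahori_iff.1 hg).2.1 a b

theorem InIwahori.orderTop_apply_self (hg : InIwahori p g) (a : Fin 2) :
    (g a a).orderTop = 0 := by
  obtain ⟨hdet, hint, hlow⟩ := inIwahori_iff.1 hg
  have hdiag : g 0 0 * g 1 1 = 1 + g 0 1 * g 1 0 := by
    rw [det_fin_two] at hdet
    linear_combination hdet
  have hprod : (g 0 0).orderTop + (g 1 1).orderTop = 0 := by
    rw [← orderTop_mul, hdiag, orderTop_add_eq_left] <;> rw [orderTop_one]
    rw [orderTop_mul]
    exact hlow.trans_le (le_add_of_nonneg_left (hint 0 1))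
  obtain ⟨h0, h1⟩ := (add_eq_zero_iff_of_nonneg (hint 0 0) (hint 1 1)).1 hprod
  fin_cases a
  exacts [h0, h1]

theorem InIwahori.mul (hg : InIwahori p g) (hh : InIwahori p h) : InIwahori p (g * h) := by
  obtain ⟨hgdet, hgint, hglow⟩ := inIwahori_iff.1 hg
  obtain ⟨hhdet, hhint, hhlow⟩ := inIwahori_iff.1 hh
  refine inIwahori_iff.2 ⟨by rw [det_mul, hgdet, hhdet, one_mul], fun a b => ?_, ?_⟩
  · simpa using le_orderTop_mul_apply (a := 0) (b := 0) (by simpa using hgint)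
      (by simpa using hhint) a b
  · rw [mul_apply_fin_two_eq_add_rev _ _ _ _ 0]
    refine lt_orderTop_add ?_ ?_ <;> rw [orderTop_mul]
    · exact hglow.trans_le (le_add_of_nonneg_right (hhint 0 0))
    · exact hhlow.trans_le (le_add_of_nonneg_left (hgint 1 1))

theorem InIwahori.map {σ : Lfield p →+* Lfield p} (hσ : ∀ f, (σ f).orderTop = f.orderTop)
    (hg : InIwahori p g) : InIwahori p (g.map σ) := by
  obtain ⟨hdet, hint, hlow⟩ := inIwahori_iff.1 hg
  refine inIwahori_iff.2 ⟨?_, fun a b => ?_, ?_⟩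
  · rw [← RingHom.mapMatrix_apply, ← RingHom.map_det, hdet, map_one]
  · simpa [hσ] using hint a b
  · simpa [hσ] using hlow

theorem InIwahori.neg (hg : InIwahori p g) : InIwahori p (-g) := by
  obtain ⟨hdet, hint, hlow⟩ := inIwahori_iff.1 hg
  exact inIwahori_iff.2 ⟨by simp [det_neg, hdet], by simpa using hint, by simpa using hlow⟩

theorem inIwahori_one : InIwahori p 1 :=
  inIwahori_iff.2 ⟨det_one, fun a b => by fin_cases a <;> fin_cases b <;> simp, by simp⟩

theorem inIwahori_upper {b : Lfield p} (hb : 0 ≤ b.orderTop) : InIwahori p !![1, b; 0, 1] :=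
  inIwahori_iff.2 ⟨by simp [det_fin_two_of], fun i j => by
    fin_cases i <;> fin_cases j <;> simp [hb], by simp⟩

theorem inIwahori_lower {c : Lfield p} (hc : 0 < c.orderTop) : InIwahori p !![1, 0; c, 1] :=
  inIwahori_iff.2 ⟨by simp [det_fin_two_of], fun i j => by
    fin_cases i <;> fin_cases j <;> simp [hc.le], by simpa using hc⟩

end Iwahori

section ChamberRep

variable {p : ℕ} [Fact p.Prime] {σ : Lfield p →+* Lfield p}

theorem inv_mul_map_ne_chamberRep_two_mul (hσ : ∀ f, (σ f).orderTop = f.orderTop) {k : ℤ}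
    (hk : k ≠ 0) {x gl gr : Matrix (Fin 2) (Fin 2) (Lfield p)} (hx : x.det = 1)
    (hgl : InIwahori p gl) (hgr : InIwahori p gr) :
    x⁻¹ * x.map σ ≠ gl * chamberRep p (2 * k) * gr := by
  intro h
  have hq : InIwahori p (gr * gl.map σ) := hgr.mul (hgl.map hσ)
  obtain ⟨j, w, hw, hT⟩ : ∃ j w, w < 0 ∧
      HasDominantEntry j w (chamberRep p (2 * k) * (gr * gl.map σ)) := by
    rw [chamberRep_two_mul]
    rcases hk.lt_or_gt with hk | hk
    · exact ⟨0, k, hk, hasDominantEntry_diagonal_mul (by simp) (by simp; norm_cast; omega)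
        hq.zero_le_orderTop (hq.orderTop_apply_self 0)⟩
    · exact ⟨1, -k, by omega, hasDominantEntry_diagonal_mul (by simp) (by simp; norm_cast; omega)
        hq.zero_le_orderTop (hq.orderTop_apply_self 1)⟩
  refine map_ne_mul_of_hasDominantEntry hσ hw (y := x * gl) (by simp [hx, hgl.1]) hT ?_
  rw [Matrix.map_mul, ← mul_nonsing_inv_cancel_left x (x.map σ) (by simp [hx]), h]
  simp only [mul_assoc]

theorem exists_inv_mul_map_eq_chamberRep_two_mul_sub_one
    (hσ : ∀ f n, (σ f).coeff n = f.coeff n ^ p) (k : ℤ) :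
    ∃ x gl gr : Matrix (Fin 2) (Fin 2) (Lfield p), x.det = 1 ∧ InIwahori p gl ∧
      InIwahori p gr ∧ x⁻¹ * x.map σ = gl * chamberRep p (2 * k - 1) * gr := by
  have hp : p.Prime := Fact.out
  obtain ⟨γ, hγ⟩ := exists_pow_eq_add_one (K := AlgebraicClosure (ZMod p)) hp.one_lt
  have hσγ (m : ℤ) :
      σ (HahnSeries.single m γ) = HahnSeries.single m γ + HahnSeries.single m 1 := by
    rw [apply_single_of_coeff_apply_eq_pow hp.ne_zero hσ, hγ, HahnSeries.single_add]
  have hk : (HahnSeries.single k 1 : Lfield p) * HahnSeries.single (-k) 1 = 1 := by simp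
  rw [chamberRep_two_mul_sub_one]
  rcases le_or_gt 0 k with h0 | h0
  · refine ⟨!![1, 0; HahnSeries.single (-k) γ, 1], !![1, HahnSeries.single k 1; 0, 1],
      !![1, HahnSeries.single k 1; 0, 1],
      by simp [det_fin_two_of], inIwahori_upper (by simpa), inIwahori_upper (by simpa), ?_⟩
    rw [inv_mul_map_lower_unipotent (hσγ _), ← lower_unipotent_eq_mul_mul hk]
  · refine ⟨!![1, HahnSeries.single k γ; 0, 1], -!![1, 0; HahnSeries.single (-k) 1, 1],
      !![1, 0; HahnSeries.single (-k) 1, 1],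
      by simp [det_fin_two_of], (inIwahori_lower (by simpa)).neg, inIwahori_lower (by simpa), ?_⟩
    rw [inv_mul_map_upper_unipotent (hσγ _), ← upper_unipotent_eq_mul_mul hk]

end ChamberRep

/-- for `SL₂` with `b = 1`, the chambers `C_M^i` (elements `w` of the
extended affine Weyl group) with nonempty affine Deligne–Lusztig set `X_w(σ)` — i.e.
such that some `x⁻¹ σ(x)`, `x ∈ SL₂(L)`, lies in the double `I`-coset of `C_M^i` —
are exactly `C_M = C_M^0` and the `C_M^i` with `i` odd.  Here `σ` is the Frobenius,
acting coefficientwise on `L = 𝔽̄_p((t))` by `c ↦ c^p`. -/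
theorem stmt15 (p : ℕ) [Fact p.Prime]
    (σ : Lfield p ≃+* Lfield p)
    (hσ : ∀ (x : Lfield p) (n : ℤ), (σ x).coeff n = x.coeff n ^ p)
    (i : ℤ) :
    (∃ x gl gr : Matrix (Fin 2) (Fin 2) (Lfield p),
        x.det = 1 ∧ InIwahori p gl ∧ InIwahori p gr ∧
        x⁻¹ * x.map σ = gl * chamberRep p i * gr) ↔
      (i = 0 ∨ Odd i) := by
  have hσ' : ∀ f, (σ.toRingHom f).orderTop = f.orderTop :=
    orderTop_apply_of_coeff_apply_eq_pow (Fact.out : p.Prime).ne_zero hσ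
  constructor
  · rintro ⟨x, gl, gr, hx, hgl, hgr, h⟩
    rcases Int.even_or_odd i with ⟨k, rfl⟩ | hodd
    · refine Or.inl (by_contra fun hk => ?_)
      rw [← two_mul] at h
      exact inv_mul_map_ne_chamberRep_two_mul hσ' (by omega) hx hgl hgr h
    · exact Or.inr hodd
  · rintro (rfl | ⟨k, rfl⟩)
    · refine ⟨1, 1, 1, det_one, inIwahori_one, inIwahori_one, ?_⟩
      ext a b
      fin_cases a <;> fin_cases b <;> simp [chamberRep]
    · have h := exists_inv_mul_map_eq_chamberRep_two_mul_sub_one (σ := σ.toRingHom) hσ (k + 1)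
      rwa [show 2 * (k + 1) - 1 = 2 * k + 1 by ring] at h
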